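/- Let (G, H) be real Banach spaces with G ⊆ H and continuous inclusion, let K : (G, ‖·‖_G) → (H, ‖·‖_H) be continuous, and let M be an m-dimensional (G, H)-submanifold of class C¹. Then the following are equivalent: (i) for every y₀ ∈ M there exist T > 0 and a map Y : [0, T] → G with Y(0) = y₀ and Y(t) ∈ M for all t ∈ [0, T], such that Y is continuous as a map into (H, ‖·‖_H), the map s ↦ K(Y(s)) is Bochner integrable on [0, T] with values in H, and Y(t) = y₀ + ∫₀ᵗ K(Y(s)) ds in H for all t ∈ [0, T]; (ii) K(y) ∈ T_y M for every y ∈ M; (iii) the restriction K|_M : (M, ‖·‖_H) → (H, ‖·‖_H) is continuous, and for every y₀ ∈ M there exists a solution Y as in (i) which is in addition continuous as a map into (G, ‖·‖_G). -/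

import Mathlib

/-!
(i) ⇒ (ii): as the topologies of `G` and `H` agree on `M`, a solution is continuous into `G`, so
`K ∘ Y` is continuous and `Y` has right derivative `K y₀` at `0`. Read in a chart `φ`, the curve
is differentiable, because `P ∘ φ` is a local diffeomorphism for a left inverse `P` of `Dφ`
(inverse function theorem); hence its velocity lies in the range of `Dφ`, which is `T_{y₀} M`.

(ii) ⇒ (iii): in a chart, tangency says `K (φ z) = Dφ(z) v(z)` for a continuous field `v` near
`φ⁻¹ y₀`. Peano's theorem, proved with Tonelli's delayed approximations and Arzelà–Ascoli, solves
`x' = v(x)`, and `Y = φ ∘ x` solves the equation; it is continuous into `G`, again because the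
two topologies agree on `M`. (iii) ⇒ (i) is immediate.
-/

open Set Function

noncomputable section

/-- `φ : V → U ∩ M` is a `C^k` local parametrization of the subset `M ⊆ H`. -/
structure IsLocalParam {H : Type*} [NormedAddCommGroup H] [NormedSpace ℝ H] {m : ℕ}
    (k : ℕ∞) (M : Set H) (V : Set (EuclideanSpace ℝ (Fin m))) (U : Set H)
    (φ : EuclideanSpace ℝ (Fin m) → H) : Prop where
  isOpen_source : IsOpen V
  isOpen_target : IsOpen U
  contDiffOn : ContDiffOn ℝ k φ V
  injOn : Set.InjOn φ V
  image_eq : φ '' V = U ∩ M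
  continuousOn_inv : ContinuousOn (Function.invFunOn φ V) (U ∩ M)
  immersion : ∀ x ∈ V, Function.Injective (fderivWithin ℝ φ V x)

/-- `M` is an `m`-dimensional `C^k`-submanifold of `H`. -/
def IsSubmanifold {H : Type*} [NormedAddCommGroup H] [NormedSpace ℝ H]
    (k : ℕ∞) (m : ℕ) (M : Set H) : Prop :=
  ∀ y ∈ M, ∃ (V : Set (EuclideanSpace ℝ (Fin m))) (U : Set H)
    (φ : EuclideanSpace ℝ (Fin m) → H), IsLocalParam k M V U φ ∧ y ∈ U

/-- The tangent space `T_y M` of the submanifold `M` at `y`. -/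
def TangentAt {H : Type*} [NormedAddCommGroup H] [NormedSpace ℝ H]
    (k : ℕ∞) (m : ℕ) (M : Set H) (y : H) : Set H :=
  {w | ∃ (V : Set (EuclideanSpace ℝ (Fin m))) (U : Set H)
    (φ : EuclideanSpace ℝ (Fin m) → H) (x : EuclideanSpace ℝ (Fin m)),
    IsLocalParam k M V U φ ∧ x ∈ V ∧ φ x = y ∧ w ∈ Set.range (fderivWithin ℝ φ V x)}

/-- `M` has one chart: a single local parametrization covers all of `M`. -/
def HasOneChart {H : Type*} [NormedAddCommGroup H] [NormedSpace ℝ H]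
    (k : ℕ∞) (m : ℕ) (M : Set H) : Prop :=
  ∃ (V : Set (EuclideanSpace ℝ (Fin m))) (U : Set H)
    (φ : EuclideanSpace ℝ (Fin m) → H), IsLocalParam k M V U φ ∧ M ⊆ U

open Topology Filter Metric MeasureTheory

theorem ContinuousLinearMap.HasLeftInverse.of_injective_of_finiteDimensional_domain
    {E F : Type*} [NormedAddCommGroup E] [NormedSpace ℝ E] [FiniteDimensional ℝ E]
    [NormedAddCommGroup F] [NormedSpace ℝ F] [CompleteSpace F]
    {A : E →L[ℝ] F} (hA : Injective A) : A.HasLeftInverse :=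
  .of_injective_of_isClosed_range_of_closedComplement_range hA
    (A.range.closed_of_finiteDimensional) (.of_finiteDimensional _)

/-- Near `t₀`, `c = (P ∘ f)⁻¹ ∘ P ∘ (f ∘ c)`, where `P ∘ f` is locally invertible at `x₀` by the
inverse function theorem. -/
theorem HasStrictFDerivAt.hasDerivWithinAt_of_comp {E F : Type*} [NormedAddCommGroup E]
    [NormedSpace ℝ E] [CompleteSpace E] [NormedAddCommGroup F] [NormedSpace ℝ F]
    {f : E → F} {A : E →L[ℝ] F} {x₀ : E} (hf : HasStrictFDerivAt f A x₀)
    {P : F →L[ℝ] E} (hP : LeftInverse P A) {c : ℝ → E} {s : Set ℝ} {t₀ : ℝ} {w : F}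
    (hc : Tendsto c (𝓝[s] t₀) (𝓝 x₀)) (hc₀ : c t₀ = x₀)
    (hfc : HasDerivWithinAt (f ∘ c) w s t₀) : HasDerivWithinAt c (P w) s t₀ := by
  have hPA : P.comp A = (ContinuousLinearEquiv.refl ℝ E : E →L[ℝ] E) := by
    ext v; exact hP v
  have hψ : HasStrictFDerivAt (P ∘ f) (ContinuousLinearEquiv.refl ℝ E : E →L[ℝ] E) x₀ :=
    hPA ▸ P.hasStrictFDerivAt.comp x₀ hf
  set N := hψ.localInverse _ _ _
  have hN : HasFDerivAt N (ContinuousLinearMap.id ℝ E) (P (f (c t₀))) := by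
    simpa [hc₀] using hψ.to_localInverse.hasFDerivAt
  have hNc : N ∘ P ∘ (f ∘ c) =ᶠ[𝓝[s] t₀] c := hc.eventually hψ.eventually_left_inverse
  have hNPfc : HasDerivWithinAt (N ∘ P ∘ (f ∘ c)) (P w) s t₀ := by
    simpa using hN.comp_hasDerivWithinAt t₀ (P.hasFDerivAt.comp_hasDerivWithinAt t₀ hfc)
  exact hNPfc.congr_of_eventuallyEq hNc.symm
    (by simpa [hc₀] using (hψ.eventually_left_inverse.self_of_nhds).symm)

theorem HasStrictFDerivAt.mem_range_of_hasDerivWithinAt_comp {E F : Type*}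
    [NormedAddCommGroup E] [NormedSpace ℝ E] [FiniteDimensional ℝ E]
    [NormedAddCommGroup F] [NormedSpace ℝ F] [CompleteSpace F]
    {f : E → F} {A : E →L[ℝ] F} {x₀ : E} (hf : HasStrictFDerivAt f A x₀) (hA : Injective A)
    {c : ℝ → E} {s : Set ℝ} {t₀ : ℝ} {w : F} (hs : UniqueDiffWithinAt ℝ s t₀)
    (hc : Tendsto c (𝓝[s] t₀) (𝓝 x₀)) (hc₀ : c t₀ = x₀)
    (hfc : HasDerivWithinAt (f ∘ c) w s t₀) : w ∈ range A := by
  obtain ⟨P, hP⟩ : A.HasLeftInverse := .of_injective_of_finiteDimensional_domain hA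
  have hcd := hf.hasDerivWithinAt_of_comp hP hc hc₀ hfc
  exact ⟨P w, hs.eq_deriv _ ((hc₀ ▸ hf.hasFDerivAt).comp_hasDerivWithinAt t₀ hcd) hfc⟩

theorem hasDerivWithinAt_Ici_of_eq_integral {F : Type*} [NormedAddCommGroup F]
    [NormedSpace ℝ F] [CompleteSpace F] {γ q : ℝ → F} {y : F} {T t : ℝ}
    (hq : ContinuousOn q (Icc 0 T)) (hγ : ∀ t ∈ Icc 0 T, γ t = y + ∫ s in (0 : ℝ)..t, q s)
    (ht : t ∈ Ico 0 T) : HasDerivWithinAt γ (q t) (Ici t) t := by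
  have hGE : Icc 0 T ∈ 𝓝[≥] t := Icc_mem_nhdsGE_of_mem ht
  have hGT : Icc 0 T ∈ 𝓝[>] t := Icc_mem_nhdsGT_of_mem ht
  have hint : IntervalIntegrable q volume 0 t :=
    (hq.mono (uIcc_of_le ht.1 ▸ Icc_subset_Icc_right ht.2.le)).intervalIntegrable
  have hprim : HasDerivWithinAt (fun u => y + ∫ s in (0 : ℝ)..u, q s) (q t) (Ici t) t :=
    (intervalIntegral.integral_hasDerivWithinAt_right hint
      ⟨_, hGT, hq.aestronglyMeasurable measurableSet_Icc⟩
      ((hq t (Ico_subset_Icc_self ht)).mono_of_mem_nhdsWithin hGT)).const_add y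
  exact hprim.congr_of_eventuallyEq (eventually_of_mem hGE hγ) (hγ t (Ico_subset_Icc_self ht))

/-- The lift is `v x = (P ∘ A x)⁻¹ (P (w x))` for a left inverse `P` of `A x₀`: `P ∘ A x` is
invertible near `x₀`. -/
theorem exists_continuousOn_lift_of_mem_range {E F : Type*} [NormedAddCommGroup E]
    [NormedSpace ℝ E] [FiniteDimensional ℝ E] [NormedAddCommGroup F] [NormedSpace ℝ F]
    [CompleteSpace F] {A : E → E →L[ℝ] F} {w : E → F} {V : Set E} {x₀ : E} (hV : IsOpen V)
    (hx₀ : x₀ ∈ V) (hA : ContinuousOn A V) (hA₀ : Injective (A x₀)) (hw : ContinuousOn w V)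
    (hwA : ∀ x ∈ V, w x ∈ range (A x)) :
    ∃ r > 0, closedBall x₀ r ⊆ V ∧ ∃ v : E → E, ContinuousOn v (closedBall x₀ r) ∧
      ∀ x ∈ closedBall x₀ r, A x (v x) = w x := by
  obtain ⟨P, hP⟩ : (A x₀).HasLeftInverse := .of_injective_of_finiteDimensional_domain hA₀
  set B : E → E →L[ℝ] E := fun x => P.comp (A x)
  have hB : ContinuousOn B V := continuousOn_const.clm_comp hA
  have hB₀ : B x₀ = 1 := ContinuousLinearMap.ext hP
  obtain ⟨ε, hε, hball⟩ := Metric.isOpen_iff.mp (hB.isOpen_inter_preimage hV Units.isOpen) x₀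
    ⟨hx₀, by simp [hB₀]⟩
  have hsub : closedBall x₀ (ε / 2) ⊆ V ∩ B ⁻¹' {u | IsUnit u} :=
    (closedBall_subset_ball (half_lt_self hε)).trans hball
  refine ⟨ε / 2, half_pos hε, fun x hx => (hsub hx).1, fun x => Ring.inverse (B x) (P (w x)),
    ?_, fun x hx => ?_⟩
  · refine ContinuousOn.clm_apply (fun x hx => ?_) (P.continuous.comp_continuousOn hw |>.mono
      fun x hx => (hsub hx).1)
    obtain ⟨u, hu⟩ := (hsub hx).2
    exact (hu ▸ NormedRing.inverse_continuousAt u).comp_continuousWithinAt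
      ((hB x (hsub hx).1).mono fun x hx => (hsub hx).1)
  · obtain ⟨u, hu⟩ := hwA x (hsub hx).1
    have hBu : B x u = P (w x) := by simp [B, hu]
    show A x (Ring.inverse (B x) (P (w x))) = w x
    rw [← hBu, ← mul_apply_eq_comp, Ring.inverse_mul_cancel _ (hsub hx).2,
      one_apply_eq_self, hu]

open scoped NNReal

theorem exists_subseq_tendsto_of_lipschitzWith {X : Type*} [MetricSpace X] {u : ℕ → ℝ → X}
    {C : ℝ≥0} {S : Set X} (hS : IsCompact S) (hu : ∀ n, LipschitzWith C (u n))
    (huS : ∀ n t, u n t ∈ S) {a b : ℝ} (hab : a ≤ b) :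
    ∃ σ : ℕ → ℕ, StrictMono σ ∧ ∃ x : ℝ → X, Continuous x ∧
      ∀ t ∈ Icc a b, Tendsto (fun k => u (σ k) t) atTop (𝓝 (x t)) := by
  have : CompactSpace (Icc a b) := isCompact_iff_compactSpace.mp isCompact_Icc
  let g : ℕ → BoundedContinuousFunction (Icc a b) X := fun n =>
    .mkOfCompact ⟨(Icc a b).domRestrict (u n), (hu n).continuous.comp continuous_subtype_val⟩
  have hg : IsCompact (closure (range g)) := by
    refine BoundedContinuousFunction.arzela_ascoli S hS _ (by rintro _ t ⟨n, rfl⟩; exact huS n t) ?_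
    refine (LipschitzWith.uniformEquicontinuous _ C ?_).equicontinuous
    rintro ⟨_, n, rfl⟩
    exact (hu n).restrict (Icc a b)
  obtain ⟨x, -, σ, hσ, hx⟩ := hg.tendsto_subseq fun n => subset_closure (mem_range_self n)
  refine ⟨σ, hσ, IccExtend hab x, x.continuous.Icc_extend', fun t ht => ?_⟩
  rw [IccExtend_of_mem hab x ht]
  exact ((continuous_eval_const (⟨t, ht⟩ : Icc a b)).tendsto x).comp hx

section DelayedPicard

variable {E : Type*} [NormedAddCommGroup E] [NormedSpace ℝ E]
  {f : E → E} {x₀ : E} {T : ℝ} (hT : 0 ≤ T) {δ : ℝ} {r : ℝ} {C : ℝ≥0}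

/-- Tonelli's delayed Picard operator. Clamping `t` to `[0, T]` keeps its iterates globally
Lipschitz and bounded. -/
def delayedPicard (f : E → E) (x₀ : E) (δ : ℝ) (u : ℝ → E) (t : ℝ) : E :=
  x₀ + ∫ s in (0 : ℝ)..(projIcc 0 T hT t : ℝ), f (u (s - δ))

theorem delayedPicard_of_nonpos (u : ℝ → E) {t : ℝ} (ht : t ≤ 0) :
    delayedPicard hT f x₀ δ u t = x₀ := by
  simp [delayedPicard, projIcc_of_le_left hT ht]

theorem delayedPicard_congr {u v : ℝ → E} {a : ℝ} (huv : ∀ s ≤ a, u s = v s) {t : ℝ}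
    (ht : t ≤ a + δ) : delayedPicard hT f x₀ δ u t = delayedPicard hT f x₀ δ v t := by
  rcases le_or_gt t 0 with ht₀ | ht₀
  · rw [delayedPicard_of_nonpos hT u ht₀, delayedPicard_of_nonpos hT v ht₀]
  have hτ : (projIcc 0 T hT t : ℝ) ≤ t := by simp [projIcc, ht₀.le]
  refine congrArg _ (intervalIntegral.integral_congr fun s hs => congrArg f (huv _ ?_))
  rw [uIcc_of_le (projIcc 0 T hT t).2.1] at hs
  linarith [hs.2]

theorem delayedPicard_mem_closedBall (hfC : ∀ y ∈ closedBall x₀ r, ‖f y‖ ≤ C) (hCT : C * T ≤ r)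
    {u : ℝ → E} (hu : ∀ t, u t ∈ closedBall x₀ r) (t : ℝ) :
    delayedPicard hT f x₀ δ u t ∈ closedBall x₀ r := by
  rw [mem_closedBall, dist_eq_norm, delayedPicard, add_sub_cancel_left]
  calc _ ≤ C * |(projIcc 0 T hT t : ℝ) - 0| :=
        intervalIntegral.norm_integral_le_of_norm_le_const fun s _ => hfC _ (hu _)
    _ ≤ C * T := by
        gcongr
        rw [sub_zero, abs_of_nonneg (projIcc 0 T hT t).2.1]
        exact (projIcc 0 T hT t).2.2
    _ ≤ r := hCT

theorem lipschitzWith_delayedPicard (hf : ContinuousOn f (closedBall x₀ r))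
    (hfC : ∀ y ∈ closedBall x₀ r, ‖f y‖ ≤ C) {u : ℝ → E} (hu : Continuous u)
    (hur : ∀ t, u t ∈ closedBall x₀ r) : LipschitzWith C (delayedPicard hT f x₀ δ u) := by
  have hint : Continuous fun s => f (u (s - δ)) :=
    hf.comp_continuous (hu.comp (continuous_sub_right δ)) fun s => hur _
  refine LipschitzWith.of_dist_le_mul fun a b => ?_
  rw [dist_eq_norm, delayedPicard, delayedPicard, add_sub_add_left_eq_sub,
    intervalIntegral.integral_interval_sub_left (hint.intervalIntegrable _ _)
      (hint.intervalIntegrable _ _)]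
  calc _ ≤ C * |(projIcc 0 T hT a : ℝ) - projIcc 0 T hT b| :=
        intervalIntegral.norm_integral_le_of_norm_le_const fun s _ => hfC _ (hur _)
    _ ≤ C * dist a b := by
        gcongr
        exact abs_projIcc_sub_projIcc hT

/-- The iterates of `delayedPicard` from the constant `x₀` agree on `(-∞, k δ]` from the `k`-th
on, so a late enough iterate solves the delayed equation on `[0, T]`. -/
theorem exists_delayed_solution (hT : 0 ≤ T) (hδ : 0 < δ) (hf : ContinuousOn f (closedBall x₀ r))
    (hfC : ∀ y ∈ closedBall x₀ r, ‖f y‖ ≤ C) (hCT : C * T ≤ r) :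
    ∃ u : ℝ → E, LipschitzWith C u ∧ (∀ t, u t ∈ closedBall x₀ r) ∧
      ∀ t ∈ Icc 0 T, u t = x₀ + ∫ s in (0 : ℝ)..t, f (u (s - δ)) := by
  set F : ℕ → ℝ → E := fun k => (delayedPicard hT f x₀ δ)^[k] fun _ => x₀
  have hF_succ : ∀ k, F (k + 1) = delayedPicard hT f x₀ δ (F k) := fun k =>
    iterate_succ_apply' _ _ _
  have hF : ∀ k, LipschitzWith C (F k) ∧ ∀ t, F k t ∈ closedBall x₀ r := by
    intro k
    induction k with
    | zero =>
      exact ⟨LipschitzWith.const' x₀, fun _ => mem_closedBall_self ((mul_nonneg C.2 hT).trans hCT)⟩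
    | succ k ih =>
      rw [hF_succ]
      exact ⟨lipschitzWith_delayedPicard hT hf hfC ih.1.continuous ih.2,
        delayedPicard_mem_closedBall hT hfC hCT ih.2⟩
  have hstab : ∀ k : ℕ, ∀ t ≤ k * δ, F (k + 1) t = F k t := by
    intro k
    induction k with
    | zero =>
      intro t ht
      rw [hF_succ, delayedPicard_of_nonpos hT _ (by simpa using ht)]
      rfl
    | succ k ih =>
      intro t ht
      rw [hF_succ (k + 1)]
      conv_rhs => rw [hF_succ k]
      refine delayedPicard_congr hT ih ?_
      push_cast at ht
      linarith
  obtain ⟨N, hN⟩ := exists_nat_ge (T / δ)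
  refine ⟨F N, (hF N).1, (hF N).2, fun t ht => ?_⟩
  rw [← hstab N t (ht.2.trans ((div_le_iff₀ hδ).mp hN)), hF_succ, delayedPicard,
    projIcc_of_mem hT ht]

end DelayedPicard

theorem eq_integral_of_tendsto_delayed {E : Type*} [NormedAddCommGroup E] [NormedSpace ℝ E]
    {f : E → E} {x₀ : E} {T r : ℝ} {C : ℝ≥0} (hf : ContinuousOn f (closedBall x₀ r))
    (hfC : ∀ y ∈ closedBall x₀ r, ‖f y‖ ≤ C) {u : ℕ → ℝ → E} {δ : ℕ → ℝ} {x : ℝ → E}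
    (hu : ∀ n, LipschitzWith C (u n)) (hur : ∀ n t, u n t ∈ closedBall x₀ r)
    (hδ : Tendsto δ atTop (𝓝 0))
    (hueq : ∀ n, ∀ t ∈ Icc 0 T, u n t = x₀ + ∫ s in (0 : ℝ)..t, f (u n (s - δ n)))
    (hux : ∀ t ∈ Icc 0 T, Tendsto (fun n => u n t) atTop (𝓝 (x t))) :
    ∀ t ∈ Icc 0 T, x t = x₀ + ∫ s in (0 : ℝ)..t, f (x s) := by
  have hlim : ∀ s ∈ Icc 0 T, Tendsto (fun n => f (u n (s - δ n))) atTop (𝓝 (f (x s))) := by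
    intro s hs
    have hxs : x s ∈ closedBall x₀ r :=
      isClosed_closedBall.mem_of_tendsto (hux s hs) (.of_forall fun n => hur n s)
    have hshift : Tendsto (fun n => (C : ℝ) * dist s (s - δ n)) atTop (𝓝 0) := by
      have h := ((tendsto_const_nhds (x := s)).dist
        ((tendsto_const_nhds (x := s)).sub hδ)).const_mul (C : ℝ)
      simpa using h
    have hconv : Tendsto (fun n => u n (s - δ n)) atTop (𝓝 (x s)) :=
      (hux s hs).congr_dist
        (squeeze_zero (fun n => dist_nonneg) (fun n => (hu n).dist_le_mul _ _) hshift)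
    exact (hf _ hxs).tendsto.comp (tendsto_nhdsWithin_iff.2 ⟨hconv, .of_forall fun n => hur _ _⟩)
  intro t ht
  have hsub : uIoc 0 t ⊆ Icc 0 T := by
    rw [uIoc_of_le ht.1]
    exact Ioc_subset_Icc_self.trans (Icc_subset_Icc_right ht.2)
  have hint := intervalIntegral.tendsto_integral_filter_of_dominated_convergence (μ := volume)
    (fun _ => (C : ℝ))
    (.of_forall fun n => (hf.comp_continuous ((hu n).continuous.comp (continuous_sub_right _))
      fun s => hur _ _).aestronglyMeasurable)
    (.of_forall fun n => .of_forall fun s _ => hfC _ (hur _ _)) intervalIntegrable_const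
    (.of_forall fun s hs => hlim s (hsub hs))
  exact tendsto_nhds_unique (hux t ht)
    ((tendsto_const_nhds.add hint).congr fun n => (hueq n t ht).symm)

/-- **Peano's existence theorem**, in integral form. -/
theorem exists_eq_integral_of_continuousOn {E : Type*} [NormedAddCommGroup E] [NormedSpace ℝ E]
    [FiniteDimensional ℝ E] {f : E → E} {x₀ : E} {r : ℝ} (hr : 0 < r)
    (hf : ContinuousOn f (closedBall x₀ r)) :
    ∃ T > 0, ∃ x : ℝ → E, Continuous x ∧ (∀ t ∈ Icc 0 T, x t ∈ closedBall x₀ r) ∧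
      ∀ t ∈ Icc 0 T, x t = x₀ + ∫ s in (0 : ℝ)..t, f (x s) := by
  obtain ⟨C₀, hC₀⟩ := (isCompact_closedBall x₀ r).exists_bound_of_continuousOn hf
  set C : ℝ≥0 := ⟨max C₀ 1, zero_le_one.trans (le_max_right _ _)⟩
  have hC : (0 : ℝ) < C := one_pos.trans_le (le_max_right _ _)
  have hfC : ∀ y ∈ closedBall x₀ r, ‖f y‖ ≤ C := fun y hy => (hC₀ y hy).trans (le_max_left _ _)
  have hT : 0 < r / C := div_pos hr hC
  have hCT : C * (r / C) ≤ r := (mul_div_cancel₀ r hC.ne').le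
  choose u hu hur hueq using fun n : ℕ =>
    exists_delayed_solution hT.le (Nat.one_div_pos_of_nat (n := n)) hf hfC hCT
  obtain ⟨σ, hσ, x, hx, hux⟩ :=
    exists_subseq_tendsto_of_lipschitzWith (isCompact_closedBall x₀ r) hu hur hT.le
  have hxr : ∀ t ∈ Icc 0 (r / C), x t ∈ closedBall x₀ r := fun t ht =>
    isClosed_closedBall.mem_of_tendsto (hux t ht) (.of_forall fun k => hur _ t)
  exact ⟨r / C, hT, x, hx, hxr, eq_integral_of_tendsto_delayed hf hfC (fun k => hu (σ k))
    (fun k => hur (σ k)) (tendsto_one_div_add_atTop_nhds_zero_nat.comp hσ.tendsto_atTop)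
    (fun k => hueq (σ k)) hux⟩

namespace IsLocalParam

variable {H : Type*} [NormedAddCommGroup H] [NormedSpace ℝ H] {m : ℕ} {M : Set H}
  {V : Set (EuclideanSpace ℝ (Fin m))} {U : Set H} {φ : EuclideanSpace ℝ (Fin m) → H}
  {x₀ : EuclideanSpace ℝ (Fin m)}

theorem mapsTo (hφ : IsLocalParam 1 M V U φ) : MapsTo φ V (U ∩ M) :=
  fun _ hx => hφ.image_eq ▸ mem_image_of_mem φ hx

theorem exists_eq (hφ : IsLocalParam 1 M V U φ) {y : H} (hyU : y ∈ U) (hyM : y ∈ M) :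
    ∃ x ∈ V, φ x = y :=
  (hφ.image_eq ▸ ⟨hyU, hyM⟩ : y ∈ φ '' V)

theorem hasStrictFDerivAt (hφ : IsLocalParam 1 M V U φ) (hx₀ : x₀ ∈ V) :
    HasStrictFDerivAt φ (fderivWithin ℝ φ V x₀) x₀ := by
  rw [fderivWithin_of_isOpen hφ.isOpen_source hx₀]
  exact (hφ.contDiffOn.contDiffAt (hφ.isOpen_source.mem_nhds hx₀)).hasStrictFDerivAt one_ne_zero

theorem tendsto_invFunOn_comp {ι : Type*} {l : Filter ι} (hφ : IsLocalParam 1 M V U φ)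
    (hx₀ : x₀ ∈ V) {γ : ι → H} (hγ : Tendsto γ l (𝓝 (φ x₀))) (hγM : ∀ᶠ t in l, γ t ∈ M) :
    Tendsto (invFunOn φ V ∘ γ) l (𝓝 x₀) ∧ φ ∘ invFunOn φ V ∘ γ =ᶠ[l] γ := by
  have hγUM : ∀ᶠ t in l, γ t ∈ U ∩ M :=
    (hγ.eventually (hφ.isOpen_target.mem_nhds (hφ.mapsTo hx₀).1)).and hγM
  refine ⟨?_, hγUM.mono fun t ht => invFunOn_eq (hφ.exists_eq ht.1 ht.2)⟩
  have hinv := hφ.continuousOn_inv _ (hφ.mapsTo hx₀)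
  rw [ContinuousWithinAt, hφ.injOn.leftInvOn_invFunOn hx₀] at hinv
  exact hinv.comp (tendsto_nhdsWithin_iff.2 ⟨hγ, hγUM⟩)

theorem mem_range_of_hasDerivWithinAt [CompleteSpace H] (hφ : IsLocalParam 1 M V U φ)
    (hx₀ : x₀ ∈ V) {γ : ℝ → H} {w : H} {s : Set ℝ} {t₀ : ℝ} (hs : UniqueDiffWithinAt ℝ s t₀)
    (hγM : ∀ᶠ t in 𝓝[s] t₀, γ t ∈ M) (hγ₀ : γ t₀ = φ x₀) (hγ : HasDerivWithinAt γ w s t₀) :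
    w ∈ range (fderivWithin ℝ φ V x₀) := by
  obtain ⟨hc, hφc⟩ := hφ.tendsto_invFunOn_comp hx₀ (hγ₀ ▸ hγ.continuousWithinAt) hγM
  refine (hφ.hasStrictFDerivAt hx₀).mem_range_of_hasDerivWithinAt_comp (hφ.immersion x₀ hx₀)
    hs hc ?_ (hγ.congr_of_eventuallyEq hφc ?_) <;> simp [hγ₀, hφ.injOn.leftInvOn_invFunOn hx₀]

theorem tangentAt_eq_range [CompleteSpace H] (hφ : IsLocalParam 1 M V U φ) (hx₀ : x₀ ∈ V) :
    TangentAt 1 m M (φ x₀) = range (fderivWithin ℝ φ V x₀) := by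
  refine Subset.antisymm ?_ fun w hw => ⟨V, U, φ, x₀, hφ, hx₀, rfl, hw⟩
  rintro w ⟨V', U', φ', x', hφ', hx', hφx', u, rfl⟩
  have hline : HasDerivAt (fun t : ℝ => x' + t • u) u 0 := by
    simpa using ((hasDerivAt_id (0 : ℝ)).smul_const u).const_add x'
  have hlineV : ∀ᶠ t in 𝓝 (0 : ℝ), x' + t • u ∈ V' :=
    hline.continuousAt.eventually_mem (by simpa using hφ'.isOpen_source.mem_nhds hx')
  refine hφ.mem_range_of_hasDerivWithinAt hx₀ (s := univ) uniqueDiffWithinAt_univ ?_ ?_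
    ((hφ'.hasStrictFDerivAt hx').hasFDerivAt.comp_hasDerivAt_of_eq (0 : ℝ) hline
      (by simp)).hasDerivWithinAt
  · rw [nhdsWithin_univ]
    exact hlineV.mono fun t ht => (hφ'.mapsTo ht).2
  · simpa using hφx'

end IsLocalParam

theorem mem_tangentAt_of_eq_integral {G H : Type*} [NormedAddCommGroup G] [NormedSpace ℝ G]
    [NormedAddCommGroup H] [NormedSpace ℝ H] [CompleteSpace H]
    {j : G →L[ℝ] H} (hj : Injective j) {K : G → H} (hK : Continuous K)
    {m : ℕ} {M : Set H} (hM : IsSubmanifold 1 m M) (htopo : ContinuousOn (invFun j) M)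
    {T : ℝ} (hT : 0 < T) {Y : ℝ → G} (hYM : ∀ t ∈ Icc 0 T, j (Y t) ∈ M)
    (hYc : ContinuousOn (fun t => j (Y t)) (Icc 0 T))
    (hYeq : ∀ t ∈ Icc 0 T, j (Y t) = j (Y 0) + ∫ s in (0 : ℝ)..t, K (Y s)) :
    K (Y 0) ∈ TangentAt 1 m M (j (Y 0)) := by
  obtain ⟨V, U, φ, hφ, hYU⟩ := hM _ (hYM 0 ⟨le_rfl, hT.le⟩)
  obtain ⟨x₀, hx₀, hφx₀⟩ := hφ.exists_eq hYU (hYM 0 ⟨le_rfl, hT.le⟩)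
  have hYG : ContinuousOn Y (Icc 0 T) :=
    (htopo.comp hYc hYM).congr fun t _ => (leftInverse_invFun hj (Y t)).symm
  have hderiv := hasDerivWithinAt_Ici_of_eq_integral (hK.comp_continuousOn hYG) hYeq ⟨le_rfl, hT⟩
  rw [← hφx₀, hφ.tangentAt_eq_range hx₀]
  exact hφ.mem_range_of_hasDerivWithinAt hx₀ (uniqueDiffOn_Ici 0 0 self_mem_Ici)
    (eventually_of_mem (Icc_mem_nhdsGE hT) hYM) hφx₀.symm hderiv

theorem exists_solution_of_mem_tangentAt {G H : Type*} [NormedAddCommGroup G] [NormedSpace ℝ G]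
    [NormedAddCommGroup H] [NormedSpace ℝ H] [CompleteSpace H]
    {j : G →L[ℝ] H} {K : G → H} (hK : Continuous K) {m : ℕ} {M : Set H}
    (hM : IsSubmanifold 1 m M) (hMG : M ⊆ range j) (htopo : ContinuousOn (invFun j) M)
    (htang : ∀ y ∈ M, ∀ g : G, j g = y → K g ∈ TangentAt 1 m M y) {y₀ : H} (hy₀ : y₀ ∈ M) :
    ∃ T > (0 : ℝ), ∃ Y : ℝ → G,
      j (Y 0) = y₀ ∧ (∀ t ∈ Icc 0 T, j (Y t) ∈ M) ∧
      ContinuousOn (fun t => j (Y t)) (Icc 0 T) ∧ ContinuousOn Y (Icc 0 T) ∧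
      IntegrableOn (fun s => K (Y s)) (Icc 0 T) ∧
      ∀ t ∈ Icc 0 T, j (Y t) = y₀ + ∫ s in (0 : ℝ)..t, K (Y s) := by
  obtain ⟨V, U, φ, hφ, hy₀U⟩ := hM y₀ hy₀
  obtain ⟨x₀, hx₀, rfl⟩ := hφ.exists_eq hy₀U hy₀
  set lift : EuclideanSpace ℝ (Fin m) → G := fun z => invFun j (φ z)
  have hφM : MapsTo φ V M := fun z hz => (hφ.mapsTo hz).2
  have hj_lift : ∀ z ∈ V, j (lift z) = φ z := fun z hz => invFun_eq (hMG (hφM hz))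
  have hlift : ContinuousOn lift V := htopo.comp hφ.contDiffOn.continuousOn hφM
  obtain ⟨r, hr, hrV, v, hv, hφv⟩ := exists_continuousOn_lift_of_mem_range hφ.isOpen_source hx₀
    (hφ.contDiffOn.continuousOn_fderivWithin hφ.isOpen_source.uniqueDiffOn le_rfl)
    (hφ.immersion x₀ hx₀) (hK.comp_continuousOn hlift) fun z hz => by
      rw [← hφ.tangentAt_eq_range hz]
      exact htang _ (hφM hz) _ (hj_lift z hz)
  obtain ⟨T, hT, x, hx, hxr, hxeq⟩ := exists_eq_integral_of_continuousOn hr hv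
  have hxV : MapsTo x (Icc 0 T) V := fun t ht => hrV (hxr t ht)
  have hY : ContinuousOn (fun t => lift (x t)) (Icc 0 T) := hlift.comp hx.continuousOn hxV
  have hx₀' : x 0 = x₀ := by simpa using hxeq 0 ⟨le_rfl, hT.le⟩
  have hderiv : ∀ t ∈ Ico 0 T,
      HasDerivWithinAt (fun t => φ (x t)) (K (lift (x t))) (Ici t) t := by
    intro t ht
    have hφx : HasDerivWithinAt (fun t => φ (x t)) (fderivWithin ℝ φ V (x t) (v (x t))) (Ici t) t :=
      (hφ.hasStrictFDerivAt (hxV (Ico_subset_Icc_self ht))).hasFDerivAt.comp_hasDerivWithinAt t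
        (hasDerivWithinAt_Ici_of_eq_integral (hv.comp hx.continuousOn hxr) hxeq ht)
    rwa [hφv _ (hxr t (Ico_subset_Icc_self ht))] at hφx
  refine ⟨T, hT, fun t => lift (x t), by rw [hj_lift _ (hxV ⟨le_rfl, hT.le⟩), hx₀'],
    fun t ht => hj_lift _ (hxV ht) ▸ hφM (hxV ht), j.continuous.comp_continuousOn hY, hY,
    (hK.comp_continuousOn hY).integrableOn_Icc, fun t ht => ?_⟩
  have hsub : Icc 0 t ⊆ Icc 0 T := Icc_subset_Icc_right ht.2
  rw [hj_lift _ (hxV ht), intervalIntegral.integral_eq_sub_of_hasDeriv_right_of_le ht.1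
    ((hφ.contDiffOn.continuousOn.comp hx.continuousOn hxV).mono hsub)
    (fun s hs => (hderiv s ⟨hs.1.le, hs.2.trans_le ht.2⟩).mono Ioi_subset_Ici_self)
    (((hK.comp_continuousOn hY).mono hsub).intervalIntegrable_of_Icc ht.1)]
  simp [hx₀']

open MeasureTheory in
theorem PDE_invariance_characterization_general
    {G H : Type*} [NormedAddCommGroup G] [NormedSpace ℝ G]
    [NormedAddCommGroup H] [NormedSpace ℝ H] [CompleteSpace H]
    (j : G →L[ℝ] H) (hj : Function.Injective j)
    {K : G → H} (hK : Continuous K)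
    {m : ℕ} {M : Set H} (hM : IsSubmanifold 1 m M)
    (hMG : M ⊆ Set.range j)
    (htopo : ContinuousOn (Function.invFun j) M) :
    ((∀ y₀ ∈ M, ∃ T > (0 : ℝ), ∃ Y : ℝ → G,
        j (Y 0) = y₀ ∧ (∀ t ∈ Set.Icc 0 T, j (Y t) ∈ M) ∧
        ContinuousOn (fun t => j (Y t)) (Set.Icc 0 T) ∧
        IntegrableOn (fun s => K (Y s)) (Set.Icc 0 T) ∧
        ∀ t ∈ Set.Icc 0 T, j (Y t) = y₀ + ∫ s in (0:ℝ)..t, K (Y s)) ↔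
      (∀ y ∈ M, ∀ g : G, j g = y → K g ∈ TangentAt 1 m M y)) ∧
    ((∀ y ∈ M, ∀ g : G, j g = y → K g ∈ TangentAt 1 m M y) ↔
      (ContinuousOn (fun y => K (Function.invFun j y)) M ∧
        ∀ y₀ ∈ M, ∃ T > (0 : ℝ), ∃ Y : ℝ → G,
          j (Y 0) = y₀ ∧ (∀ t ∈ Set.Icc 0 T, j (Y t) ∈ M) ∧
          ContinuousOn (fun t => j (Y t)) (Set.Icc 0 T) ∧
          ContinuousOn Y (Set.Icc 0 T) ∧
          IntegrableOn (fun s => K (Y s)) (Set.Icc 0 T) ∧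
          ∀ t ∈ Set.Icc 0 T, j (Y t) = y₀ + ∫ s in (0:ℝ)..t, K (Y s))) := by
  have tangent_of_solutions : (∀ y₀ ∈ M, ∃ T > (0 : ℝ), ∃ Y : ℝ → G,
      j (Y 0) = y₀ ∧ (∀ t ∈ Icc 0 T, j (Y t) ∈ M) ∧ ContinuousOn (fun t => j (Y t)) (Icc 0 T) ∧
      IntegrableOn (fun s => K (Y s)) (Icc 0 T) ∧
      ∀ t ∈ Icc 0 T, j (Y t) = y₀ + ∫ s in (0 : ℝ)..t, K (Y s)) →
      ∀ y ∈ M, ∀ g : G, j g = y → K g ∈ TangentAt 1 m M y := by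
    rintro hsol _ hy g rfl
    obtain ⟨T, hT, Y, hY₀, hYM, hYc, -, hYeq⟩ := hsol _ hy
    obtain rfl := hj hY₀
    exact mem_tangentAt_of_eq_integral hj hK hM htopo hT hYM hYc hYeq
  have solution_of_tangent := fun htang y₀ (hy₀ : y₀ ∈ M) =>
    exists_solution_of_mem_tangentAt hK hM hMG htopo htang hy₀
  refine ⟨⟨tangent_of_solutions, fun htang y₀ hy₀ => ?_⟩,
    ⟨fun htang => ⟨hK.comp_continuousOn htopo, solution_of_tangent htang⟩,
      fun h => tangent_of_solutions fun y₀ hy₀ => ?_⟩⟩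
  · obtain ⟨T, hT, Y, hY₀, hYM, hYc, -, hYi, hYeq⟩ := solution_of_tangent htang y₀ hy₀
    exact ⟨T, hT, Y, hY₀, hYM, hYc, hYi, hYeq⟩
  · obtain ⟨T, hT, Y, hY₀, hYM, hYc, -, hYi, hYeq⟩ := h.2 y₀ hy₀
    exact ⟨T, hT, Y, hY₀, hYM, hYc, hYi, hYeq⟩

open MeasureTheory in
/-- Let `(G, H)` be continuously embedded real Banach spaces (embedding
`j : G → H`, injective and continuous linear), `K : G → H` continuous, and `M` an
`m`-dimensional `(G,H)`-submanifold of class `C¹` (i.e. `M ⊆ G` and the two induced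
topologies on `M` coincide). The following are equivalent:
(i) local invariance of `M` for the PDE `dY = K(Y) dt`: every `y₀ ∈ M` admits a local
    `M`-valued solution, continuous in `H`;
(ii) `K(y) ∈ T_y M` for each `y ∈ M`;
(iii) `K|_M` is `‖·‖_H`-continuous and every `y₀ ∈ M` admits a local `M`-valued solution
    which is moreover continuous as a map into `G`. -/
theorem PDE_invariance_characterization
    {G H : Type*} [NormedAddCommGroup G] [NormedSpace ℝ G] [CompleteSpace G]
    [NormedAddCommGroup H] [NormedSpace ℝ H] [CompleteSpace H]
    (j : G →L[ℝ] H) (hj : Function.Injective j)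
    {K : G → H} (hK : Continuous K)
    {m : ℕ} {M : Set H} (hM : IsSubmanifold 1 m M)
    (hMG : M ⊆ Set.range j)
    (htopo : ContinuousOn (Function.invFun j) M) :
    ((∀ y₀ ∈ M, ∃ T > (0 : ℝ), ∃ Y : ℝ → G,
        j (Y 0) = y₀ ∧ (∀ t ∈ Set.Icc 0 T, j (Y t) ∈ M) ∧
        ContinuousOn (fun t => j (Y t)) (Set.Icc 0 T) ∧
        IntegrableOn (fun s => K (Y s)) (Set.Icc 0 T) ∧
        ∀ t ∈ Set.Icc 0 T, j (Y t) = y₀ + ∫ s in (0:ℝ)..t, K (Y s)) ↔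
      (∀ y ∈ M, ∀ g : G, j g = y → K g ∈ TangentAt 1 m M y)) ∧
    ((∀ y ∈ M, ∀ g : G, j g = y → K g ∈ TangentAt 1 m M y) ↔
      (ContinuousOn (fun y => K (Function.invFun j y)) M ∧
        ∀ y₀ ∈ M, ∃ T > (0 : ℝ), ∃ Y : ℝ → G,
          j (Y 0) = y₀ ∧ (∀ t ∈ Set.Icc 0 T, j (Y t) ∈ M) ∧
          ContinuousOn (fun t => j (Y t)) (Set.Icc 0 T) ∧
          ContinuousOn Y (Set.Icc 0 T) ∧
          IntegrableOn (fun s => K (Y s)) (Set.Icc 0 T) ∧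
          ∀ t ∈ Set.Icc 0 T, j (Y t) = y₀ + ∫ s in (0:ℝ)..t, K (Y s))) :=
  PDE_invariance_characterization_general j hj hK hM hMG htopo
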